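/- arXiv:2209.02103 — 4 statements merged into one kernel-verified Lean document; each statement's English description precedes it below -/
import Mathlib

section
/- Let p, q, p', q' be points in the Euclidean plane and r > 0. Suppose dist(p, q) < r, dist(p, p') ≥ r, dist(p, q') ≥ r, the closed segment [p', q'] intersects the closed segment [p, q], and p does not lie in the closed disk D with diameter [p', q'] (i.e., the set of points x with dist(x, p')² + dist(x, q')² ≤ dist(p', q')²). Then q lies in the closed disk D. -/
open EuclideanGeometry

lemma stmt0_aux (s d b ip : ℝ) (hs0 : 0 ≤ s) (hb : 0 ≤ b) (hb1 : 0 ≤ 1 - b)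
    (hs1 : s ≤ b * d) (hs2 : s ≤ (1 - b) * d)
    (hipl : -(s * d) ≤ ip) (hipr : ip ≤ s * d) :
    s ^ 2 + (2 * b - 1) * ip + b * (b - 1) * d ^ 2 ≤ 0 := by
  rcases le_total b (1/2) with hb2 | hb2
  · nlinarith [mul_nonneg hb hs0, sq_nonneg (s - b * d)]
  · nlinarith [mul_nonneg hb1 hs0, sq_nonneg (s - (1 - b) * d)]

open RealInnerProductSpace in
theorem stmt_0 (p q p' q' : EuclideanSpace ℝ (Fin 2)) (r : ℝ) (hr : 0 < r)
    (hpq : dist p q < r) (hpp' : r ≤ dist p p') (hpq' : r ≤ dist p q')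
    (hcross : (segment ℝ p' q' ∩ segment ℝ p q).Nonempty)
    (hp : ¬ (dist p p' ^ 2 + dist p q' ^ 2 ≤ dist p' q' ^ 2)) :
    dist q p' ^ 2 + dist q q' ^ 2 ≤ dist p' q' ^ 2 := by
  obtain ⟨x, hx', hx⟩ := hcross
  obtain ⟨a, b, ha, hb, hab, hsum⟩ := hx'
  have ha' : a = 1 - b := by linarith
  subst ha'
  set d : ℝ := dist p' q' with hd
  set s : ℝ := dist x q with hs
  set t : ℝ := dist p x with ht
  set w : EuclideanSpace ℝ (Fin 2) := q - x with hw
  set v : EuclideanSpace ℝ (Fin 2) := q' - p' with hv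
  have hnv : ‖v‖ = d := by rw [hv, hd, dist_comm, dist_eq_norm]
  have hdxp' : dist x p' = b * d := by
    have hxp' : x - p' = b • v := by rw [hv, ← hsum]; module
    rw [dist_eq_norm, hxp', norm_smul, Real.norm_eq_abs, abs_of_nonneg hb, hnv]
  have hdxq' : dist x q' = (1 - b) * d := by
    have hxq' : x - q' = (1 - b) • (-v) := by rw [hv, ← hsum]; module
    rw [dist_eq_norm, hxq', norm_smul, Real.norm_eq_abs, abs_of_nonneg ha, norm_neg, hnv]
  have hts : t + s = dist p q := dist_add_dist_of_mem_segment hx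
  have h1 : r ≤ t + b * d := by
    calc r ≤ dist p p' := hpp'
    _ ≤ dist p x + dist x p' := dist_triangle _ _ _
    _ = t + b * d := by rw [hdxp', ht]
  have h2 : r ≤ t + (1 - b) * d := by
    calc r ≤ dist p q' := hpq'
    _ ≤ dist p x + dist x q' := dist_triangle _ _ _
    _ = t + (1 - b) * d := by rw [hdxq', ht]
  have hs1 : s < b * d := by linarith
  have hs2 : s < (1 - b) * d := by linarith
  have hs0 : 0 ≤ s := dist_nonneg
  have hqp' : q - p' = w + b • v := by rw [hw, hv, ← hsum]; module
  have hqq' : q - q' = w + (b - 1) • v := by rw [hw, hv, ← hsum]; module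
  have hnw : ‖w‖ = s := by rw [hw, hs, dist_eq_norm, norm_sub_rev q x]
  have hip : |⟪w, v⟫| ≤ s * d := by
    rw [← hnw, ← hnv]; exact abs_real_inner_le_norm w v
  have hinner : ⟪q - p', q - q'⟫ ≤ 0 := by
    have hexp : ⟪q - p', q - q'⟫
        = ‖w‖ ^ 2 + (2 * b - 1) * ⟪w, v⟫ + b * (b - 1) * ‖v‖ ^ 2 := by
      rw [hqp', hqq']
      simp only [inner_add_left, inner_add_right, inner_smul_left, inner_smul_right,
        real_inner_self_eq_norm_sq, RCLike.star_def, conj_trivial, real_inner_comm v w]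
      ring
    rw [hexp, hnw, hnv]
    rcases abs_le.1 hip with ⟨hipl, hipr⟩
    exact stmt0_aux s d b _ hs0 hb ha hs1.le hs2.le hipl hipr
  have e1 : dist q p' ^ 2 = ‖q - p'‖ ^ 2 := by rw [dist_eq_norm]
  have e2 : dist q q' ^ 2 = ‖q - q'‖ ^ 2 := by rw [dist_eq_norm]
  have e3 : d ^ 2 = ‖q - q'‖ ^ 2 - 2 * ⟪q - q', q - p'⟫ + ‖q - p'‖ ^ 2 := by
    rw [hd, dist_eq_norm, show p' - q' = (q - q') - (q - p') by abel, norm_sub_sq_real]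
  rw [e1, e2, e3]
  have hc : ⟪q - q', q - p'⟫ = ⟪q - p', q - q'⟫ := real_inner_comm _ _
  linarith [hinner, hc.le, hc.ge]
end

section
/- Let P be a finite set of points in the Euclidean plane with pairwise distinct distances. Then every point p ∈ P is the nearest neighbor of at most 5 other points of P. -/
/-!
If `q` and `r` both have `p` as their nearest neighbour, then `qr` is the longest side of the
triangle `pqr`, so by the law of cosines the angle at `p` exceeds `π/3`, i.e. its cosine is below
`1/2`. Measuring directions from `p` against that of one such point `q₀`, the directions of the
others lie in the open arc `(π/3, 5π/3)`, of length `4 · π/3`, and are pairwise more than `π/3`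
apart; hence there are at most four of them besides `q₀`.
-/

open Real EuclideanGeometry Module

theorem Finset.card_le_of_mapsTo_Ico_of_le_abs_sub {α : Type*} (s : Finset α) (t : α → ℝ)
    {a δ : ℝ} (n : ℕ) (hδ : 0 < δ) (hmem : ∀ x ∈ s, t x ∈ Set.Ico a (a + n * δ))
    (hsep : ∀ x ∈ s, ∀ y ∈ s, x ≠ y → δ ≤ |t x - t y|) : s.card ≤ n := by
  have hbin : ∀ x ∈ s, 0 ≤ ⌊(t x - a) / δ⌋ ∧ ⌊(t x - a) / δ⌋ < n := fun x hx => by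
    obtain ⟨hlo, hhi⟩ := hmem x hx
    refine ⟨Int.floor_nonneg.2 (div_nonneg (by linarith) hδ.le), Int.floor_lt.2 ?_⟩
    rw [div_lt_iff₀ hδ]
    push_cast
    linarith
  refine (Finset.card_le_card_of_injOn (fun x => ⌊(t x - a) / δ⌋.toNat) (t := Finset.range n)
    (fun x hx => ?_) fun x hx y hy hxy => ?_).trans (Finset.card_range n).le
  · have := hbin x hx
    simp only [Finset.mem_coe, Finset.mem_range]
    omega
  · by_contra hne
    have hfloor : ⌊(t x - a) / δ⌋ = ⌊(t y - a) / δ⌋ := by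
      have := hbin x hx
      have := hbin y hy
      simp only at hxy
      omega
    have hclose := Int.abs_sub_lt_one_of_floor_eq_floor hfloor
    rw [← sub_div, sub_sub_sub_cancel_right, abs_div, abs_of_pos hδ, div_lt_one hδ] at hclose
    exact (hsep x hx y hy hne).not_gt hclose

theorem Real.one_half_le_cos_of_abs_le {x : ℝ} (hx : |x| ≤ π / 3) : 1 / 2 ≤ cos x := by
  rw [← cos_abs, ← cos_pi_div_three]
  exact cos_le_cos_of_nonneg_of_le_pi (abs_nonneg x) (by linarith [pi_pos]) hx

theorem Real.mem_Ioo_of_cos_lt_one_half {x : ℝ} (h₀ : 0 ≤ x) (h₂π : x < 2 * π)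
    (hcos : cos x < 1 / 2) : x ∈ Set.Ioo (π / 3) (5 * π / 3) := by
  constructor
  · by_contra! hx
    exact hcos.not_ge (one_half_le_cos_of_abs_le (by rwa [abs_of_nonneg h₀]))
  · by_contra! hx
    rw [← cos_two_pi_sub] at hcos
    exact hcos.not_ge (one_half_le_cos_of_abs_le (by rw [abs_of_nonneg (by linarith)]; linarith))

theorem Real.Angle.card_le_five_of_cos_sub_lt_one_half {α : Type*} (s : Finset α)
    (f : α → Real.Angle) (hsep : ∀ x ∈ s, ∀ y ∈ s, x ≠ y → (f x - f y).cos < 1 / 2) :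
    s.card ≤ 5 := by
  classical
  rcases s.eq_empty_or_nonempty with rfl | ⟨x₀, hx₀⟩
  · simp
  set θ₀ := (f x₀).toReal
  set t : α → ℝ := fun x => toIcoMod two_pi_pos θ₀ (f x).toReal
  have hcos_t : ∀ x y, Real.cos (t x - t y) = (f x - f y).cos := fun x y => by
    rw [← cos_coe, coe_sub, coe_toIcoMod, coe_toIcoMod, coe_toReal, coe_toReal]
  have ht₀ : t x₀ = θ₀ := toIcoMod_eq_self two_pi_pos |>.2 ⟨le_rfl, by linarith [pi_pos]⟩
  have hmem : ∀ x ∈ s.erase x₀, t x ∈ Set.Ico (θ₀ + π / 3) (θ₀ + π / 3 + (4 : ℕ) * (π / 3)) := by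
    intro x hx
    obtain ⟨hlo, hhi⟩ := toIcoMod_mem_Ico two_pi_pos θ₀ (f x).toReal
    have hcos := hsep x (s.mem_of_mem_erase hx) x₀ hx₀ (s.ne_of_mem_erase hx)
    rw [← hcos_t, ht₀] at hcos
    obtain ⟨h₁, h₂⟩ := mem_Ioo_of_cos_lt_one_half (by linarith) (by linarith) hcos
    constructor <;> push_cast <;> linarith
  have hsep_t : ∀ x ∈ s.erase x₀, ∀ y ∈ s.erase x₀, x ≠ y → π / 3 ≤ |t x - t y| := by
    intro x hx y hy hxy
    by_contra! hclose
    have hcos := hsep x (s.mem_of_mem_erase hx) y (s.mem_of_mem_erase hy) hxy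
    rw [← hcos_t] at hcos
    exact hcos.not_ge (one_half_le_cos_of_abs_le hclose.le)
  have := (s.erase x₀).card_le_of_mapsTo_Ico_of_le_abs_sub t 4 (by positivity) hmem hsep_t
  rw [Finset.card_erase_of_mem hx₀] at this
  omega

section EuclideanPlane

variable {V P : Type*} [NormedAddCommGroup V] [InnerProductSpace ℝ V] [MetricSpace P]
  [NormedAddTorsor V P]

theorem EuclideanGeometry.cos_angle_lt_one_half_of_dist_lt {p q r : P}
    (hq : dist q p < dist q r) (hr : dist r p < dist r q) : cos (∠ q p r) < 1 / 2 := by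
  have hlaw := law_cos q p r
  rw [dist_comm r q] at hr
  by_contra! h
  nlinarith [dist_nonneg (x := q) (y := p), dist_nonneg (x := r) (y := p),
    mul_nonneg (dist_nonneg (x := q) (y := p)) (dist_nonneg (x := r) (y := p))]

theorem EuclideanGeometry.card_le_five_of_cos_angle_lt_one_half [Fact (finrank ℝ V = 2)]
    (T : Finset P) (p : P) (hp : p ∉ T)
    (hT : ∀ q ∈ T, ∀ r ∈ T, q ≠ r → cos (∠ q p r) < 1 / 2) : T.card ≤ 5 := by
  have : FiniteDimensional ℝ V := .of_fact_finrank_eq_two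
  have : Nontrivial V := Module.nontrivial_of_finrank_eq_succ (Fact.out : finrank ℝ V = 2)
  let o : Orientation ℝ V (Fin 2) := (finBasisOfFinrankEq ℝ V Fact.out).orientation
  obtain ⟨v, hv⟩ := exists_ne (0 : V)
  have hne : ∀ q ∈ T, q -ᵥ p ≠ 0 := fun q hq => vsub_ne_zero.2 (ne_of_mem_of_not_mem hq hp)
  refine Real.Angle.card_le_five_of_cos_sub_lt_one_half T (fun q => o.oangle v (q -ᵥ p))
    fun q hq r hr hqr => ?_
  rw [o.oangle_sub_left hv (hne r hr) (hne q hq), o.cos_oangle_eq_cos_angle (hne r hr) (hne q hq),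
    ← angle, angle_comm]
  exact hT q hq r hr hqr

end EuclideanPlane

open Classical

theorem stmt_4_general (P : Finset (EuclideanSpace ℝ (Fin 2)))
    (p : EuclideanSpace ℝ (Fin 2)) :
    (P.filter (fun q => q ≠ p ∧ ∀ x ∈ P, x ≠ q → x ≠ p → dist q p < dist q x)).card ≤ 5 := by
  have : Fact (finrank ℝ (EuclideanSpace ℝ (Fin 2)) = 2) := ⟨finrank_euclideanSpace_fin⟩
  refine card_le_five_of_cos_angle_lt_one_half _ p (by simp) fun q hq r hr hqr => ?_
  rw [Finset.mem_filter] at hq hr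
  exact cos_angle_lt_one_half_of_dist_lt (hq.2.2 r hr.1 (Ne.symm hqr) hr.2.1)
    (hr.2.2 q hq.1 hqr hq.2.1)

theorem stmt_4 (P : Finset (EuclideanSpace ℝ (Fin 2)))
    (hdist : ∀ a ∈ P, ∀ b ∈ P, ∀ c ∈ P, ∀ d ∈ P, a ≠ b → c ≠ d →
      ({a, b} : Set (EuclideanSpace ℝ (Fin 2))) ≠ {c, d} → dist a b ≠ dist c d)
    (p : EuclideanSpace ℝ (Fin 2)) (hp : p ∈ P) :
    (P.filter (fun q => q ≠ p ∧ ∀ x ∈ P, x ≠ q → x ≠ p → dist q p < dist q x)).card ≤ 5 :=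
  stmt_4_general P p
end

section
/- Let P be a finite set of points in the Euclidean plane with pairwise distinct distances, and let p, q, p', q' be four distinct points of P such that q is the nearest neighbor of p in P \ {p} and q' is the nearest neighbor of p' in P \ {p'}. Then the open segments (p, q) and (p', q') do not intersect. -/
theorem stmt_9 (P : Finset (EuclideanSpace ℝ (Fin 2)))
    (hdist : ∀ a ∈ P, ∀ b ∈ P, ∀ c ∈ P, ∀ d ∈ P, a ≠ b → c ≠ d →
      ({a, b} : Set (EuclideanSpace ℝ (Fin 2))) ≠ {c, d} → dist a b ≠ dist c d)
    (p q p' q' : EuclideanSpace ℝ (Fin 2))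
    (hp : p ∈ P) (hq : q ∈ P) (hp' : p' ∈ P) (hq' : q' ∈ P)
    (h1 : p ≠ q) (h2 : p ≠ p') (h3 : p ≠ q') (h4 : q ≠ p') (h5 : q ≠ q') (h6 : p' ≠ q')
    (hnn : ∀ x ∈ P, x ≠ p → x ≠ q → dist p q < dist p x)
    (hnn' : ∀ x ∈ P, x ≠ p' → x ≠ q' → dist p' q' < dist p' x) :
    openSegment ℝ p q ∩ openSegment ℝ p' q' = ∅ := by
  rw [Set.eq_empty_iff_forall_notMem]
  rintro x ⟨hx1, hx2⟩
  have e1 : dist p x + dist x q = dist p q :=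
    dist_add_dist_of_mem_segment (openSegment_subset_segment ℝ p q hx1)
  have e2 : dist p' x + dist x q' = dist p' q' :=
    dist_add_dist_of_mem_segment (openSegment_subset_segment ℝ p' q' hx2)
  have t1 : dist p q' ≤ dist p x + dist x q' := dist_triangle _ _ _
  have t2 : dist p' q ≤ dist p' x + dist x q := dist_triangle _ _ _
  have l1 : dist p q < dist p q' := hnn q' hq' h3.symm h5.symm
  have l2 : dist p' q' < dist p' q := hnn' q hq h4 h5
  linarith
end

section
/- Let G be a finite graph on n vertices such that every induced subgraph of G on k ≥ 1 vertices contains an independent set of size at least k/c, for some real c ≥ 1. Then the chromatic number of G is at most c·(1 + ln n) (for n ≥ 1). -/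
lemma greedy_key (V : Type*) [Fintype V] [DecidableEq V] (G : SimpleGraph V)
    (c : ℝ) (hc : 1 ≤ c)
    (hindep : ∀ s : Finset V, 1 ≤ s.card → ∃ t ⊆ s,
      (∀ a ∈ t, ∀ b ∈ t, a ≠ b → ¬ G.Adj a b) ∧ (s.card : ℝ) / c ≤ t.card) :
    ∀ i : ℕ, ∀ s : Finset V, (s.card : ℝ) < Real.exp (i / c) →
      ∃ f : V → ℕ, (∀ v ∈ s, f v < i) ∧
        (∀ a ∈ s, ∀ b ∈ s, G.Adj a b → f a ≠ f b) := by
  have hc0 : (0:ℝ) < c := lt_of_lt_of_le one_pos hc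
  intro i
  induction i with
  | zero =>
    intro s hs
    have : s.card = 0 := by
      simp only [Nat.cast_zero, zero_div, Real.exp_zero] at hs
      exact_mod_cast Nat.lt_one_iff.mp (by exact_mod_cast hs)
    have hse : s = ∅ := Finset.card_eq_zero.mp this
    exact ⟨fun _ => 0, by simp [hse], by simp [hse]⟩
  | succ i ih =>
    intro s hs
    by_cases hse : s = ∅
    · exact ⟨fun _ => 0, by simp [hse], by simp [hse]⟩
    · have hs1 : 1 ≤ s.card := Nat.one_le_iff_ne_zero.mpr (by
        simpa [Finset.card_eq_zero] using hse)
      obtain ⟨t, hts, htind, htcard⟩ := hindep s hs1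
      set s' := s \ t with hs'
      have hcard' : (s'.card : ℝ) = (s.card : ℝ) - t.card := by
        rw [hs', Finset.card_sdiff_of_subset hts]
        have := Finset.card_le_card hts
        push_cast [Nat.cast_sub this]
        ring
      have hlt : (s'.card : ℝ) < Real.exp (i / c) := by
        have h1 : (s'.card : ℝ) ≤ (s.card : ℝ) * (1 - 1/c) := by
          rw [hcard']
          have e : (s.card:ℝ) * (1 - 1/c) = (s.card:ℝ) - (s.card:ℝ)/c := by ring
          linarith [htcard]
        have h2 : (1 : ℝ) - 1/c ≤ Real.exp (-(1/c)) := by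
          have := Real.add_one_le_exp (-(1/c))
          linarith
        have h3 : (s.card : ℝ) * (1 - 1/c) ≤ (s.card : ℝ) * Real.exp (-(1/c)) :=
          mul_le_mul_of_nonneg_left h2 (by positivity)
        have h4 : (s.card : ℝ) * Real.exp (-(1/c)) <
            Real.exp ((i+1) / c) * Real.exp (-(1/c)) := by
          apply mul_lt_mul_of_pos_right _ (Real.exp_pos _)
          exact_mod_cast hs
        have h5 : Real.exp ((i+1) / c) * Real.exp (-(1/c)) = Real.exp (i / c) := by
          rw [← Real.exp_add]; ring_nf
        calc (s'.card : ℝ) ≤ _ := h1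
          _ ≤ _ := h3
          _ < _ := h4
          _ = _ := h5
      obtain ⟨f', hf'lt, hf'prop⟩ := ih s' hlt
      refine ⟨fun v => if v ∈ t then i else f' v, ?_, ?_⟩
      · intro v hv
        by_cases hvt : v ∈ t
        · simp [hvt]
        · simp only [hvt, if_false]
          exact Nat.lt_succ_of_lt (hf'lt v (Finset.mem_sdiff.mpr ⟨hv, hvt⟩))
      · intro a ha b hb hadj
        by_cases hat : a ∈ t <;> by_cases hbt : b ∈ t
        · exact absurd hadj (htind a hat b hbt (G.ne_of_adj hadj))
        · simp only [hat, hbt, if_true, if_false]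
          exact (Nat.ne_of_lt (hf'lt b (Finset.mem_sdiff.mpr ⟨hb, hbt⟩))).symm
        · simp only [hat, hbt, if_true, if_false]
          exact Nat.ne_of_lt (hf'lt a (Finset.mem_sdiff.mpr ⟨ha, hat⟩))
        · simp only [hat, hbt, if_false]
          exact hf'prop a (Finset.mem_sdiff.mpr ⟨ha, hat⟩)
            b (Finset.mem_sdiff.mpr ⟨hb, hbt⟩) hadj

theorem stmt_13 (V : Type*) [Fintype V] [DecidableEq V] (G : SimpleGraph V)
    (n : ℕ) (hn : n = Fintype.card V) (h1 : 1 ≤ n)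
    (c : ℝ) (hc : 1 ≤ c)
    (hindep : ∀ s : Finset V, 1 ≤ s.card → ∃ t ⊆ s,
      (∀ a ∈ t, ∀ b ∈ t, a ≠ b → ¬ G.Adj a b) ∧ (s.card : ℝ) / c ≤ t.card) :
    ∃ k : ℕ, (k : ℝ) ≤ c * (1 + Real.log n) ∧ G.chromaticNumber ≤ (k : ℕ∞) := by
  have hc0 : (0:ℝ) < c := lt_of_lt_of_le one_pos hc
  have hlogn : (0:ℝ) ≤ Real.log n := Real.log_nonneg (by exact_mod_cast h1)
  set K : ℕ := ⌊c * Real.log n⌋₊ + 1 with hK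
  have hKle : (K : ℝ) ≤ c * (1 + Real.log n) := by
    have h := Nat.floor_le (by positivity : (0:ℝ) ≤ c * Real.log n)
    push_cast [hK]
    nlinarith
  have hKgt : c * Real.log n < (K : ℝ) := by
    push_cast [hK]
    exact Nat.lt_floor_add_one _
  have hnlt : (n : ℝ) < Real.exp (K / c) := by
    have hlog : Real.log n < (K : ℝ) / c := by
      rw [lt_div_iff₀ hc0]; linarith [hKgt]
    calc (n : ℝ) = Real.exp (Real.log n) := by
          rw [Real.exp_log (by exact_mod_cast h1 : (0:ℝ) < n)]
      _ < Real.exp (K / c) := Real.exp_lt_exp.mpr hlog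
  have hcard : ((Finset.univ : Finset V).card : ℝ) < Real.exp (K / c) := by
    rwa [Finset.card_univ, ← hn]
  obtain ⟨f, hflt, hfprop⟩ := greedy_key V G c hc hindep K Finset.univ hcard
  refine ⟨K, hKle, ?_⟩
  have hcol : G.Colorable K := by
    refine ⟨SimpleGraph.Coloring.mk (fun v => ⟨f v, hflt v (Finset.mem_univ v)⟩) ?_⟩
    intro a b hadj
    simp only [ne_eq, Fin.mk.injEq]
    exact hfprop a (Finset.mem_univ a) b (Finset.mem_univ b) hadj
  exact hcol.chromaticNumber_le
end
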